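/- If the Bregman divergences B(w, ŵ_n) have bounded variance under p, E_p[B(w,ŵ_n)] → 0, and |y| ≤ c, w ≤ M pointwise, then the variance of the importance-sampled mean estimator (1/n)Σ y_i ŵ_n(a_i,x_i) tends to 0 as n → ∞, using the decomposition E_p[B(w,ŵ_n)²] = Var_p[B(w,ŵ_n)] + (E_p[B(w,ŵ_n)])². -/
import Mathlib


open MeasureTheory Filter

/-- Under bounded outcome, bounded true weights, bounded variance of the Bregman divergences
and vanishing expected Bregman divergence, the variance bound `(1/n)·E_p[(y·ŵ_n)²]` of the
importance-sampled mean estimator tends to zero. -/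
theorem stmt_17 {α : Type*} [MeasurableSpace α] (p : Measure α) [IsProbabilityMeasure p]
    (q : Measure α) (hqp : q ≪ p)
    (w : α → ℝ) (hw : ∀ z, w z = (q.rnDeriv p z).toReal)
    (wh B : ℕ → α → ℝ) (y : α → ℝ) (c M K : ℝ)
    (hy : ∀ z, |y z| ≤ c) (hM : ∀ z, w z ≤ M)
    (hdom : ∀ n z, |wh n z - w z| ≤ B n z)
    (hBint : ∀ n, Integrable (B n) p)
    (hB2int : ∀ n, Integrable (fun z => (B n z) ^ 2) p)
    (hEB : Tendsto (fun n => ∫ z, B n z ∂p) atTop (nhds 0))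
    (hVar : ∀ n, ∫ z, (B n z) ^ 2 ∂p - (∫ z, B n z ∂p) ^ 2 ≤ K)
    (hint : ∀ n, Integrable (fun z => (y z * wh n z) ^ 2) p) :
    Tendsto (fun n : ℕ => (1 / (n : ℝ)) * ∫ z, (y z * wh n z) ^ 2 ∂p)
      atTop (nhds 0) := by
  have hne : Nonempty α := by
    by_contra h
    have h1 := measure_univ (μ := p)
    rw [not_nonempty_iff] at h
    simp [Set.univ_eq_empty_iff.mpr h] at h1
  have hw0 : ∀ z, 0 ≤ w z := fun z => (hw z) ▸ ENNReal.toReal_nonneg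
  have hB0 : ∀ n z, 0 ≤ B n z := fun n z => (abs_nonneg _).trans (hdom n z)
  have hc0 : 0 ≤ c := (abs_nonneg _).trans (hy (Classical.arbitrary α))
  have hM0 : 0 ≤ M := (hw0 (Classical.arbitrary α)).trans (hM _)
  set E := fun n => ∫ z, B n z ∂p with hE
  have hE0 : ∀ n, 0 ≤ E n := fun n => integral_nonneg (hB0 n)
  have hEev : ∀ᶠ n in atTop, E n ≤ 1 :=
    hEB.eventually (eventually_le_nhds (by norm_num : (0:ℝ) < 1))
  have key : ∀ n, (∫ z, (y z * wh n z)^2 ∂p)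
      ≤ c^2*M^2 + 2*c^2*M*(E n) + c^2*(∫ z, (B n z)^2 ∂p) := by
    intro n
    have hint2 : Integrable (fun z => c^2*M^2 + 2*c^2*M*(B n z) + c^2*(B n z)^2) p :=
      ((integrable_const _).add ((hBint n).const_mul _)).add ((hB2int n).const_mul _)
    have hmono : (∫ z, (y z * wh n z)^2 ∂p)
        ≤ ∫ z, (c^2*M^2 + 2*c^2*M*(B n z) + c^2*(B n z)^2) ∂p := by
      refine integral_mono (hint n) hint2 ?_
      intro z
      have h1 : |wh n z| ≤ M + B n z := by
        calc |wh n z| = |w z + (wh n z - w z)| := by ring_nf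
          _ ≤ |w z| + |wh n z - w z| := abs_add_le _ _
          _ ≤ M + B n z :=
              add_le_add (by rw [abs_of_nonneg (hw0 z)]; exact hM z) (hdom n z)
      have h2 : |y z * wh n z| ≤ c * (M + B n z) := by
        rw [abs_mul]
        exact mul_le_mul (hy z) h1 (abs_nonneg _) hc0
      have h3 := pow_le_pow_left₀ (abs_nonneg _) h2 2
      rw [sq_abs] at h3
      show (y z * wh n z)^2 ≤ c^2*M^2 + 2*c^2*M*(B n z) + c^2*(B n z)^2
      calc (y z * wh n z)^2 ≤ (c * (M + B n z))^2 := h3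
        _ = c^2*M^2 + 2*c^2*M*(B n z) + c^2*(B n z)^2 := by ring
    have heq : ∫ z, (c^2*M^2 + 2*c^2*M*(B n z) + c^2*(B n z)^2) ∂p
        = c^2*M^2 + 2*c^2*M*(E n) + c^2*(∫ z, (B n z)^2 ∂p) := by
      have e1 := integral_add (μ := p)
        (f := fun z => c^2*M^2 + 2*c^2*M*(B n z)) (g := fun z => c^2*(B n z)^2)
        ((integrable_const _).add ((hBint n).const_mul _)) ((hB2int n).const_mul _)
      have e2 := integral_add (μ := p)
        (f := fun _ => c^2*M^2) (g := fun z => 2*c^2*M*(B n z))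
        (integrable_const _) ((hBint n).const_mul _)
      rw [e1, e2, integral_const, integral_const_mul, integral_const_mul]
      simp [hE]
    rw [heq] at hmono
    exact hmono
  set C := c^2*M^2 + 2*c^2*M + c^2*(K+1) with hC
  have hlb : ∀ᶠ n : ℕ in atTop, 0 ≤ (1 / (n : ℝ)) * ∫ z, (y z * wh n z) ^ 2 ∂p := by
    filter_upwards with n
    exact mul_nonneg (by positivity) (integral_nonneg fun z => sq_nonneg _)
  have hub : ∀ᶠ n : ℕ in atTop,
      (1 / (n : ℝ)) * ∫ z, (y z * wh n z) ^ 2 ∂p ≤ C * (1 / (n : ℝ)) := by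
    filter_upwards [hEev] with n hn
    have h4 : ∫ z, (B n z)^2 ∂p ≤ K + 1 := by nlinarith [hVar n, hE0 n, hn]
    have h5 : ∫ z, (y z * wh n z)^2 ∂p ≤ C := by
      have hk := key n
      nlinarith [hE0 n, hn, sq_nonneg c, mul_nonneg (mul_nonneg hc0 hc0) hM0]
    calc (1 / (n : ℝ)) * ∫ z, (y z * wh n z) ^ 2 ∂p
        ≤ (1 / (n : ℝ)) * C := mul_le_mul_of_nonneg_left h5 (by positivity)
      _ = C * (1 / (n : ℝ)) := mul_comm _ _
  have hCtend : Tendsto (fun n : ℕ => C * (1 / (n : ℝ))) atTop (nhds 0) := by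
    have := tendsto_one_div_atTop_nhds_zero_nat.const_mul C
    simpa using this
  exact squeeze_zero' hlb hub hCtend
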